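/- For real z > 0, integer v ≥ 0, and real x > 0, ∫₀^x t^v ln(1 + z t) dt = (1/(v+1)) [ (x^(v+1) - (-1)^(v+1)/z^(v+1)) ln(1 + z x) + Σ_{i=1}^{v+1} (-1)^i x^(v-i+2) / ((v - i + 2) z^(i-1)) + C₀ ], where C₀ is the constant making the right-hand side vanish at x = 0; equivalently, the derivative with respect to x of (1/(v+1))[ (x^(v+1) - (-1)^(v+1)/z^(v+1)) ln(1 + z x) + Σ_{i=1}^{v+1} (-1)^i x^(v-i+2)/((v-i+2) z^(i-1)) ] equals x^v ln(1 + z x). -/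

import Mathlib

open Finset

lemma key_sum (z x : ℝ) (hz : z ≠ 0) : ∀ v : ℕ,
    (1 + z * x) * ∑ i ∈ Finset.Icc 1 (v + 1), (-1 : ℝ) ^ i * x ^ (v + 1 - i) / z ^ (i - 1)
      = -z * x ^ (v + 1) + (-1 : ℝ) ^ (v + 1) / z ^ v := by
  intro v
  induction v with
  | zero => simp
  | succ n ih =>
      rw [show n + 1 + 1 = (n + 1) + 1 from rfl, Finset.sum_Icc_succ_top (by omega)]
      have hre : ∑ i ∈ Finset.Icc 1 (n + 1), (-1 : ℝ) ^ i * x ^ (n + 1 + 1 - i) / z ^ (i - 1)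
          = x * ∑ i ∈ Finset.Icc 1 (n + 1), (-1 : ℝ) ^ i * x ^ (n + 1 - i) / z ^ (i - 1) := by
        rw [Finset.mul_sum]
        refine Finset.sum_congr rfl fun i hi => ?_
        simp only [Finset.mem_Icc] at hi
        rw [show n + 1 + 1 - i = (n + 1 - i) + 1 by omega, pow_succ]
        ring
      rw [hre]
      have h1 : (1 + z * x) * (x * ∑ i ∈ Finset.Icc 1 (n + 1),
          (-1 : ℝ) ^ i * x ^ (n + 1 - i) / z ^ (i - 1))
          = x * (-z * x ^ (n + 1) + (-1 : ℝ) ^ (n + 1) / z ^ n) := by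
        rw [← ih]; ring
      rw [mul_add, h1]
      simp only [Nat.add_sub_cancel, Nat.sub_self, pow_succ]
      field_simp
      ring

/-- Gradshteyn–Ryzhik 2.729.1-type antiderivative: for `z > 0`, `v : ℕ`, the function
`G(x) = (1/(v+1)) [ (x^(v+1) - (-1)^(v+1)/z^(v+1)) ln(1+zx)
        + Σ_{i=1}^{v+1} (-1)^i x^(v-i+2)/((v-i+2) z^(i-1))]`
has derivative `x^v ln(1+zx)` at every `x > 0`. -/
theorem stmt3 (v : ℕ) (z x : ℝ) (hz : 0 < z) (hx : 0 < x) :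
    HasDerivAt (fun y : ℝ =>
      (1 / (v + 1 : ℝ)) *
        ((y ^ (v + 1) - (-1 : ℝ) ^ (v + 1) / z ^ (v + 1)) * Real.log (1 + z * y) +
          ∑ i ∈ Finset.Icc 1 (v + 1),
            (-1 : ℝ) ^ i * y ^ (v + 2 - i) / ((v + 2 - i : ℕ) * z ^ (i - 1))))
      (x ^ v * Real.log (1 + z * x)) x := by
  have hpos : (0:ℝ) < 1 + z * x := by positivity
  have hne : (1 + z * x) ≠ 0 := ne_of_gt hpos
  -- derivative of log(1+z*y)
  have hinner : HasDerivAt (fun y : ℝ => 1 + z * y) z x := by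
    simpa using ((hasDerivAt_id x).const_mul z).const_add (1:ℝ)
  have hln : HasDerivAt (fun y : ℝ => Real.log (1 + z * y)) (z / (1 + z * x)) x := by
    have := (Real.hasDerivAt_log hne).comp x hinner
    rw [div_eq_inv_mul]; exact this
  -- derivative of the first factor
  have hA : HasDerivAt (fun y : ℝ => y ^ (v + 1) - (-1 : ℝ) ^ (v + 1) / z ^ (v + 1))
      ((v + 1 : ℝ) * x ^ v) x := by
    simpa using (hasDerivAt_pow (v + 1) x).sub_const ((-1 : ℝ) ^ (v + 1) / z ^ (v + 1))
  have hprod := hA.mul hln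
  -- derivative of the sum
  have hsum : HasDerivAt (fun y : ℝ => ∑ i ∈ Finset.Icc 1 (v + 1),
      (-1 : ℝ) ^ i * y ^ (v + 2 - i) / ((v + 2 - i : ℕ) * z ^ (i - 1)))
      (∑ i ∈ Finset.Icc 1 (v + 1), (-1 : ℝ) ^ i * x ^ (v + 1 - i) / z ^ (i - 1)) x := by
    refine HasDerivAt.fun_sum fun i hi => ?_
    simp only [Finset.mem_Icc] at hi
    have hpow : HasDerivAt (fun y : ℝ => y ^ (v + 2 - i))
        ((v + 2 - i : ℕ) * x ^ (v + 1 - i)) x := by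
      have := hasDerivAt_pow (v + 2 - i) x
      rwa [show v + 2 - i - 1 = v + 1 - i by omega] at this
    have h2 := (hpow.const_mul ((-1 : ℝ) ^ i)).div_const ((v + 2 - i : ℕ) * z ^ (i - 1))
    refine h2.congr_deriv ?_
    have hne2 : ((v + 2 - i : ℕ) : ℝ) ≠ 0 := by
      have : 1 ≤ v + 2 - i := by omega
      positivity
    have hzne : z ^ (i - 1) ≠ 0 := pow_ne_zero _ (ne_of_gt hz)
    field_simp
  have hG := ((hprod.add hsum).const_mul (1 / (v + 1 : ℝ)))
  refine hG.congr_deriv ?_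
  have hs : ∑ i ∈ Finset.Icc 1 (v + 1), (-1 : ℝ) ^ i * x ^ (v + 1 - i) / z ^ (i - 1)
      = (-z * x ^ (v + 1) + (-1 : ℝ) ^ (v + 1) / z ^ v) / (1 + z * x) := by
    rw [eq_div_iff hne, mul_comm]
    exact key_sum z x (ne_of_gt hz) v
  rw [hs]
  have hv1 : ((v : ℝ) + 1) ≠ 0 := by positivity
  have hzv : z ^ (v + 1) ≠ 0 := pow_ne_zero _ (ne_of_gt hz)
  have hzv' : z ^ v ≠ 0 := pow_ne_zero _ (ne_of_gt hz)
  field_simp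
  ring
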